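/- Let ν^m_i = #{j : λ^m_i − λ^m_j ∈ Λ^m} where λ^m is the enumeration of Λ^m. For m ≥ 2 and i ≤ c_m − g_m one has ν^m_i = ν^{m−1}_i. -/

import Mathlib

/-!
Below its conductor, `Λ^m` is `q·Λ^{m-1}`: the only other candidate is `c_m` itself, and
`c_m = q (q^{m-1} - q^⌊(m-1)/2⌋)` with `q^{m-1} - q^⌊(m-1)/2⌋ ≥ c_{m-1}`. Since `Λ^{m-1}`
contains every integer from `c_{m-1}` on, induction on `m` gives `λ^m_k = c_m` for
`k = q^⌊m/2⌋ - 1 = c_m - g_m`, and hence `λ^m_i = q λ^{m-1}_i` for `i ≤ k`. For such `i`, every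
`λ^m_j` and every `a ∈ Λ^m` with `λ^m_j + a = λ^m_i` lies below `c_m`, so dividing by `q`
matches the sets counted by `ν^m_i` and `ν^{m-1}_i`.
-/

/-- The Garcia–Stichtenoth tower of Weierstrass semigroups:
`Λ¹ = ℕ₀`, `Λᵐ = q·Λ^{m-1} ∪ {i : i ≥ qᵐ - q^⌊(m+1)/2⌋}` for `m ≥ 2`. -/
def GSsemigroup (q : ℕ) : ℕ → Set ℕ
  | 0 => Set.univ
  | 1 => Set.univ
  | (m + 2) => (fun x => q * x) '' GSsemigroup q (m + 1) ∪
      {i : ℕ | q ^ (m + 2) - q ^ ((m + 3) / 2) ≤ i}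

/-- `c_m = q^m - q^⌊(m+1)/2⌋`, the conductor of `Λ^m`. -/
def gsC (q m : ℕ) : ℕ := q ^ m - q ^ ((m + 1) / 2)

/-- `g_m = (q^⌊(m+1)/2⌋ - 1)(q^⌈(m-1)/2⌉ - 1)`, the genus of `Λ^m`
(note `⌈(m-1)/2⌉ = ⌊m/2⌋` for `m ≥ 1`). -/
def gsG (q m : ℕ) : ℕ := (q ^ ((m + 1) / 2) - 1) * (q ^ (m / 2) - 1)

/-- `A_i = {j : q^{2i-1} - q^i ≤ j ≤ q^{2i-1} - q^{i-1} - 1}`. -/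
def gsA (q i : ℕ) : Set ℕ :=
  {j : ℕ | q ^ (2 * i - 1) - q ^ i ≤ j ∧ j ≤ q ^ (2 * i - 1) - q ^ (i - 1) - 1}

/-- The enumeration `λ` of `Λ^m`: the increasing bijection `ℕ₀ → Λ^m`. -/
noncomputable def gsEnum (q m : ℕ) : ℕ → ℕ := Nat.nth (fun n => n ∈ GSsemigroup q m)

/-- `ν_i = #{j : λ_i - λ_j ∈ Λ^m}` (the subtraction being in `ℤ`,
i.e. `∃ a ∈ Λ^m, λ_j + a = λ_i`). -/
noncomputable def gsNu (q m i : ℕ) : ℕ :=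
  Set.ncard {j : ℕ | ∃ a ∈ GSsemigroup q m, gsEnum q m j + a = gsEnum q m i}

/-- The order (Feng–Rao) bound `δ_i = min {ν_j : j > i}`. -/
noncomputable def gsDelta (q m i : ℕ) : ℕ := sInf (gsNu q m '' {j : ℕ | i < j})

/-- The semigroup floor `⌊k⌋_{Λ^m}`: the largest element of `Λ^m` not exceeding `k`. -/
noncomputable def gsFloor (q m k : ℕ) : ℕ := sSup {x ∈ GSsemigroup q m | x ≤ k}

/-- `λ⁻¹(x)` for `x ∈ Λ^m`: the number of elements of `Λ^m` below `x`. -/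
noncomputable def gsLinv (q m x : ℕ) : ℕ := Set.ncard {y ∈ GSsemigroup q m | y < x}

namespace Nat

variable {p p' : ℕ → Prop}

theorem nth_add_of_forall_le {c n : ℕ} (hp : ∀ x, c ≤ x → p x) (hn : nth p n = c)
    (k : ℕ) : nth p (n + k) = c + k := by
  classical
  have hinf : (Set.ofPred p).Infinite := (Set.Ici_infinite c).mono hp
  have hcount : count p (c + k) = n + k := by
    rw [count_add, ← hn, count_nth_of_infinite hinf, hn,
      count_of_forall fun j _ => hp (c + j) le_self_add]
  simpa [hcount] using nth_count (hp (c + k) le_self_add)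

theorem count_mul_eq_count [DecidablePred p] [DecidablePred p'] {q b : ℕ} (hq : 0 < q)
    (h : ∀ y < q * b, p y ↔ ∃ x, p' x ∧ q * x = y) : count p (q * b) = count p' b := by
  rw [count_eq_card_filter_range, count_eq_card_filter_range, ← Finset.card_image_of_injective
    {x ∈ Finset.range b | p' x} (mul_right_injective₀ hq.ne')]
  congr 1
  ext y
  simp only [Finset.mem_filter, Finset.mem_range, Finset.mem_image]
  constructor
  · rintro ⟨hy, hpy⟩
    obtain ⟨x, hx, rfl⟩ := (h y hy).1 hpy
    exact ⟨x, ⟨Nat.lt_of_mul_lt_mul_left hy, hx⟩, rfl⟩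
  · rintro ⟨x, ⟨hxb, hx⟩, rfl⟩
    have hy : q * x < q * b := Nat.mul_lt_mul_of_pos_left hxb hq
    exact ⟨hy, (h _ hy).2 ⟨x, hx, rfl⟩⟩

theorem nth_eq_mul_nth {q n : ℕ} (hq : 0 < q) (hinf : (Set.ofPred p').Infinite)
    (h : ∀ y ≤ q * nth p' n, p y ↔ ∃ x, p' x ∧ q * x = y) : nth p n = q * nth p' n := by
  classical
  have hcount : count p (q * nth p' n) = n := by
    rw [count_mul_eq_count hq fun y hy => h y hy.le, count_nth_of_infinite hinf]
  simpa [hcount] using nth_count ((h _ le_rfl).2 ⟨_, nth_mem_of_infinite hinf n, rfl⟩)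

end Nat

section GSsemigroup

variable {q : ℕ}

theorem gsC_succ (q m : ℕ) : gsC q (m + 1) = q * (q ^ m - q ^ (m / 2)) := by
  rw [gsC, Nat.mul_sub, ← pow_succ', ← pow_succ']
  congr 2
  omega

theorem gsC_sub_gsG (hq : 0 < q) (m : ℕ) : gsC q m - gsG q m = q ^ (m / 2) - 1 := by
  obtain ⟨a, ha⟩ : ∃ a, q ^ ((m + 1) / 2) = a + 1 :=
    ⟨_, (Nat.succ_pred_eq_of_pos (by positivity)).symm⟩
  obtain ⟨b, hb⟩ : ∃ b, q ^ (m / 2) = b + 1 := ⟨_, (Nat.succ_pred_eq_of_pos (by positivity)).symm⟩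
  have hpow : q ^ m = (a + 1) * (b + 1) := by rw [← ha, ← hb, ← pow_add]; congr 1; omega
  rw [gsC, gsG, hpow, ha, hb]
  simp only [Nat.add_sub_cancel]
  have hexp : (a + 1) * (b + 1) = a * b + a + b + 1 := by ring
  omega

theorem GSsemigroup_succ (q m : ℕ) :
    GSsemigroup q (m + 1) = (q * ·) '' GSsemigroup q m ∪ {x | gsC q (m + 1) ≤ x} := by
  rcases m with _ | m
  · ext x
    simp [GSsemigroup, gsC]
  · rfl

theorem mem_GSsemigroup_of_gsC_le {m x : ℕ} (h : gsC q m ≤ x) : x ∈ GSsemigroup q m := by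
  rcases m with _ | m
  · trivial
  · rw [GSsemigroup_succ]
    exact Or.inr h

theorem GSsemigroup_infinite (q m : ℕ) : (GSsemigroup q m).Infinite :=
  (Set.Ici_infinite (gsC q m)).mono fun _ => mem_GSsemigroup_of_gsC_le

theorem mem_GSsemigroup_succ_iff (hq : 0 < q) {m x : ℕ} (hx : x ≤ gsC q (m + 1)) :
    x ∈ GSsemigroup q (m + 1) ↔ ∃ b ∈ GSsemigroup q m, q * b = x := by
  rw [GSsemigroup_succ]
  constructor
  · rintro (hb | hcx)
    · exact hb
    · refine ⟨q ^ m - q ^ (m / 2), mem_GSsemigroup_of_gsC_le ?_, ?_⟩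
      · have : q ^ (m / 2) ≤ q ^ ((m + 1) / 2) := Nat.pow_le_pow_right hq (by omega)
        rw [gsC]
        omega
      · rw [← gsC_succ]
        exact le_antisymm hcx hx
  · exact Or.inl

theorem gsEnum_strictMono (q m : ℕ) : StrictMono (gsEnum q m) :=
  Nat.nth_strictMono (GSsemigroup_infinite q m)

theorem gsEnum_pred_pow_succ_half (hq : 0 < q) {m : ℕ}
    (h : gsEnum q m (q ^ (m / 2) - 1) = gsC q m) :
    gsEnum q m (q ^ ((m + 1) / 2) - 1) = q ^ m - q ^ (m / 2) := by
  have h1 : 1 ≤ q ^ (m / 2) := Nat.one_le_pow _ _ hq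
  have h2 : q ^ (m / 2) ≤ q ^ ((m + 1) / 2) := Nat.pow_le_pow_right hq (by omega)
  have h3 : q ^ ((m + 1) / 2) ≤ q ^ m := Nat.pow_le_pow_right hq (by omega)
  rw [show q ^ ((m + 1) / 2) - 1 = q ^ (m / 2) - 1 + (q ^ ((m + 1) / 2) - q ^ (m / 2)) by omega,
    gsEnum, Nat.nth_add_of_forall_le (fun _ => mem_GSsemigroup_of_gsC_le) h, gsC]
  omega

theorem gsEnum_succ_eq_mul_of_gsEnum_eq_gsC (hq : 0 < q) {m i : ℕ}
    (h : gsEnum q m (q ^ (m / 2) - 1) = gsC q m) (hi : i ≤ q ^ ((m + 1) / 2) - 1) :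
    gsEnum q (m + 1) i = q * gsEnum q m i := by
  have hle : q * gsEnum q m i ≤ gsC q (m + 1) := by
    rw [gsC_succ, ← gsEnum_pred_pow_succ_half hq h]
    exact Nat.mul_le_mul_left q ((gsEnum_strictMono q m).monotone hi)
  exact Nat.nth_eq_mul_nth hq (GSsemigroup_infinite q m)
    fun y hy => mem_GSsemigroup_succ_iff hq (hy.trans hle)

theorem gsEnum_pred_pow_half (hq : 0 < q) (m : ℕ) : gsEnum q m (q ^ (m / 2) - 1) = gsC q m := by
  induction m with
  | zero => exact Nat.nth_zero_of_zero trivial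
  | succ m ih =>
    rw [gsEnum_succ_eq_mul_of_gsEnum_eq_gsC hq ih le_rfl, gsEnum_pred_pow_succ_half hq ih,
      gsC_succ]

theorem gsEnum_succ_eq_mul (hq : 0 < q) {m i : ℕ} (hi : i ≤ q ^ ((m + 1) / 2) - 1) :
    gsEnum q (m + 1) i = q * gsEnum q m i :=
  gsEnum_succ_eq_mul_of_gsEnum_eq_gsC hq (gsEnum_pred_pow_half hq m) hi

theorem gsNu_succ (hq : 0 < q) {m i : ℕ} (hi : i ≤ q ^ ((m + 1) / 2) - 1) :
    gsNu q (m + 1) i = gsNu q m i := by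
  have hscale : ∀ j ≤ i, gsEnum q (m + 1) j = q * gsEnum q m j :=
    fun j hj => gsEnum_succ_eq_mul hq (hj.trans hi)
  have hic : gsEnum q (m + 1) i ≤ gsC q (m + 1) := by
    rw [← gsEnum_pred_pow_half hq]
    exact (gsEnum_strictMono q (m + 1)).monotone hi
  unfold gsNu
  congr 1
  ext j
  constructor
  · rintro ⟨a, ha, hja⟩
    have hji : j ≤ i := (gsEnum_strictMono q (m + 1)).le_iff_le.1 (by omega)
    obtain ⟨b, hb, rfl⟩ := (mem_GSsemigroup_succ_iff hq (by omega)).1 ha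
    refine ⟨b, hb, Nat.eq_of_mul_eq_mul_left hq ?_⟩
    rw [Nat.mul_add, ← hscale j hji, ← hscale i le_rfl, hja]
  · rintro ⟨b, hb, hjb⟩
    have hji : j ≤ i := (gsEnum_strictMono q m).le_iff_le.1 (by omega)
    refine ⟨q * b, (GSsemigroup_succ q m).symm ▸ Or.inl ⟨b, hb, rfl⟩, ?_⟩
    rw [hscale j hji, hscale i le_rfl, ← Nat.mul_add, hjb]

end GSsemigroup

theorem stmt14_general (q : ℕ) (hq : 2 ≤ q) (m : ℕ) (i : ℕ)
    (hi : i ≤ gsC q m - gsG q m) :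
    gsNu q m i = gsNu q (m - 1) i := by
  rcases m with _ | m
  · rfl
  · rw [gsC_sub_gsG (by omega)] at hi
    exact gsNu_succ (by omega) hi

/-- for `m ≥ 2` and `i ≤ c_m - g_m`, `ν^m_i = ν^{m-1}_i`. -/
theorem stmt14 (q : ℕ) (hq : 2 ≤ q) (m : ℕ) (hm : 2 ≤ m) (i : ℕ)
    (hi : i ≤ gsC q m - gsG q m) :
    gsNu q m i = gsNu q (m - 1) i :=
  stmt14_general q hq m i hi
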